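/- Let m, n be positive integers with n dividing m, set r = m/n and ε = exp(2πi/m), and let k, ℓ, ℓ' be integers with 1 + k + k² = ℓ·r and 1 + 2k = ℓ'·r. Then for F = diag(ε, ε^k, ε^{−k−1}) and G = diag(1, ε^{−r}, ε^{r}) the following matrix identities hold: E F E⁻¹ = F^k G^ℓ, E G E⁻¹ = F^{−r} G^{−(k+1)}, B F B⁻¹ = F G^{ℓ'}, and B G B⁻¹ = G⁻¹. -/

import Mathlib

/-!
`F` and `G` are diagonal with entries powers of `ε`, so every matrix in the four identities is
`diag(ε^a, ε^b, ε^c)` for an exponent vector `(a, b, c) ∈ ℤ³`, and products and inverses act on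
these vectors additively. Conjugation by `E` rotates the diagonal cyclically and conjugation by
`B` swaps its last two entries. Each identity thus becomes an identity of integer vectors, which
holds by `1 + k + k² = ℓ r` and `1 + 2k = ℓ' r`.
-/

open Matrix Complex

noncomputable section

/-- The group `SU(3)`: 3×3 complex unitary matrices of determinant 1. -/
abbrev SU3 : Type := ↥(Matrix.specialUnitaryGroup (Fin 3) ℂ)

noncomputable instance : Group SU3 :=
  { (inferInstance : Monoid SU3) with
    inv := fun A => ⟨star A.val,
      ⟨Unitary.star_mem A.2.1, by
        have h2 : A.val.det = 1 := A.2.2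
        show Matrix.detMonoidHom (star A.val) = 1
        show (star A.val).det = 1
        rw [Matrix.star_eq_conjTranspose, Matrix.det_conjTranspose, h2, star_one]⟩⟩
    inv_mul_cancel := fun A => Subtype.ext A.2.1.1 }

/-- The matrix `E` with rows (0,1,0), (0,0,1), (1,0,0). -/
def EM : Matrix (Fin 3) (Fin 3) ℂ := !![0, 1, 0; 0, 0, 1; 1, 0, 0]

/-- The matrix `B` with rows (-1,0,0), (0,0,-1), (0,-1,0). -/
def BM : Matrix (Fin 3) (Fin 3) ℂ := !![-1, 0, 0; 0, 0, -1; 0, -1, 0]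

/-- `ε = exp(2πi/m)`. -/
def eps (m : ℕ) : ℂ := Complex.exp (2 * Real.pi * Complex.I / m)

/-- The diagonal matrix `F = diag(ε, ε^k, ε^(-k-1))` with `ε = exp(2πi/m)`. -/
def FM (m : ℕ) (k : ℤ) : Matrix (Fin 3) (Fin 3) ℂ :=
  Matrix.diagonal ![eps m, eps m ^ k, eps m ^ (-k - 1)]

/-- The diagonal matrix `G = diag(1, ε^(-r), ε^r)` with `ε = exp(2πi/m)`. -/
def GM (m r : ℕ) : Matrix (Fin 3) (Fin 3) ℂ :=
  Matrix.diagonal ![1, eps m ^ (-(r : ℤ)), eps m ^ (r : ℤ)]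

def diagPow {K n : Type*} [Field K] [DecidableEq n] (ζ : K) (a : n → ℤ) : Matrix n n K :=
  diagonal fun i => ζ ^ a i

section diagPow

variable {K n : Type*} [DecidableEq n] {ζ : K}

theorem diagPow_zero [Field K] : diagPow ζ (0 : n → ℤ) = 1 := by
  simp [diagPow]

theorem diagPow_add [Field K] [Fintype n] (hζ : ζ ≠ 0) (a b : n → ℤ) :
    diagPow ζ (a + b) = diagPow ζ a * diagPow ζ b := by
  simp [diagPow, zpow_add₀ hζ]

theorem star_diagPow [RCLike K] (hζ : ‖ζ‖ = 1) (a : n → ℤ) :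
    star (diagPow ζ a) = diagPow ζ (-a) := by
  have : star ζ = ζ⁻¹ := (RCLike.inv_eq_conj hζ).symm
  simp [diagPow, star_eq_conjTranspose, diagonal_conjTranspose, star_zpow₀, this]

theorem diagPow_fin_three [Field K] (a b c : ℤ) :
    diagPow ζ ![a, b, c] = diagonal ![ζ ^ a, ζ ^ b, ζ ^ c] := by
  rw [diagPow]; congr; funext i; fin_cases i <;> rfl

end diagPow

theorem norm_eps (m : ℕ) : ‖eps m‖ = 1 := by
  rw [eps, show 2 * Real.pi * I / m = ((2 * Real.pi / m : ℝ) : ℂ) * I by push_cast; ring]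
  exact norm_exp_ofReal_mul_I _

theorem EM_mul_diagonal_mul_star (x y z : ℂ) :
    EM * diagonal ![x, y, z] * star EM = diagonal ![y, z, x] := by
  ext i j
  fin_cases i <;> fin_cases j <;>
    simp [EM, mul_apply, Fin.sum_univ_three, star_eq_conjTranspose, vecMul_diagonal]

theorem BM_mul_diagonal_mul_star (x y z : ℂ) :
    BM * diagonal ![x, y, z] * star BM = diagonal ![x, z, y] := by
  ext i j
  fin_cases i <;> fin_cases j <;>
    simp [BM, mul_apply, Fin.sum_univ_three, star_eq_conjTranspose, vecMul_diagonal]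

namespace SU3

theorem coe_inv (A : SU3) : ((A⁻¹ : SU3) : Matrix (Fin 3) (Fin 3) ℂ) = star A.val := rfl

variable {ζ : ℂ} {A : SU3}

theorem coe_zpow_of_coe_eq_diagPow {a : Fin 3 → ℤ} (hζ : ‖ζ‖ = 1) (hA : A.val = diagPow ζ a)
    (z : ℤ) :
    ((A ^ z : SU3) : Matrix (Fin 3) (Fin 3) ℂ) = diagPow ζ (z • a) := by
  have hζ₀ : ζ ≠ 0 := norm_ne_zero_iff.mp (hζ ▸ one_ne_zero)
  induction z using Int.induction_on with
  | zero => simp [diagPow_zero]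
  | succ i ih =>
    rw [_root_.zpow_add_one, Submonoid.coe_mul, ih, hA, ← diagPow_add hζ₀, add_smul, one_smul]
  | pred i ih =>
    rw [_root_.zpow_sub_one, Submonoid.coe_mul, ih, coe_inv, hA, star_diagPow hζ,
      ← diagPow_add hζ₀, sub_smul, one_smul, sub_eq_add_neg]

theorem coe_conj_of_coe_eq_EM {E : SU3} {a b c : ℤ} (hE : E.val = EM)
    (hA : A.val = diagPow ζ ![a, b, c]) :
    ((E * A * E⁻¹ : SU3) : Matrix (Fin 3) (Fin 3) ℂ) = diagPow ζ ![b, c, a] := by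
  rw [Submonoid.coe_mul, Submonoid.coe_mul, coe_inv, hE, hA, diagPow_fin_three,
    diagPow_fin_three, EM_mul_diagonal_mul_star]

theorem coe_conj_of_coe_eq_BM {B : SU3} {a b c : ℤ} (hB : B.val = BM)
    (hA : A.val = diagPow ζ ![a, b, c]) :
    ((B * A * B⁻¹ : SU3) : Matrix (Fin 3) (Fin 3) ℂ) = diagPow ζ ![a, c, b] := by
  rw [Submonoid.coe_mul, Submonoid.coe_mul, coe_inv, hB, hA, diagPow_fin_three,
    diagPow_fin_three, BM_mul_diagonal_mul_star]

end SU3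

theorem statement3_general (m n : ℕ)
    (k l l' : ℤ)
    (hl : 1 + k + k ^ 2 = l * ((m / n : ℕ) : ℤ))
    (hl' : 1 + 2 * k = l' * ((m / n : ℕ) : ℤ))
    (E B F G : SU3)
    (hE : (E : Matrix (Fin 3) (Fin 3) ℂ) = EM)
    (hB : (B : Matrix (Fin 3) (Fin 3) ℂ) = BM)
    (hF : (F : Matrix (Fin 3) (Fin 3) ℂ) = FM m k)
    (hG : (G : Matrix (Fin 3) (Fin 3) ℂ) = GM m (m / n)) :
    E * F * E⁻¹ = F ^ k * G ^ l ∧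
    E * G * E⁻¹ = F ^ (-((m / n : ℕ) : ℤ)) * G ^ (-(k + 1)) ∧
    B * F * B⁻¹ = F * G ^ l' ∧
    B * G * B⁻¹ = G⁻¹ := by
  set r : ℤ := ((m / n : ℕ) : ℤ)
  have hε := norm_eps m
  have hε₀ : eps m ≠ 0 := Complex.exp_ne_zero _
  replace hF : F.val = diagPow (eps m) ![1, k, -k - 1] := by
    rw [hF, FM, diagPow_fin_three, zpow_one]
  replace hG : G.val = diagPow (eps m) ![0, -r, r] := by
    rw [hG, GM, diagPow_fin_three, zpow_zero]
  refine ⟨?_, ?_, ?_, ?_⟩ <;> apply Subtype.ext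
  · rw [SU3.coe_conj_of_coe_eq_EM hE hF, Submonoid.coe_mul, SU3.coe_zpow_of_coe_eq_diagPow hε hF,
      SU3.coe_zpow_of_coe_eq_diagPow hε hG, ← diagPow_add hε₀]
    congr 1; funext i; fin_cases i <;> simp <;> linarith
  · rw [SU3.coe_conj_of_coe_eq_EM hE hG, Submonoid.coe_mul, SU3.coe_zpow_of_coe_eq_diagPow hε hF,
      SU3.coe_zpow_of_coe_eq_diagPow hε hG, ← diagPow_add hε₀]
    congr 1; funext i; fin_cases i <;> simp <;> linarith
  · rw [SU3.coe_conj_of_coe_eq_BM hB hF, Submonoid.coe_mul, hF,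
      SU3.coe_zpow_of_coe_eq_diagPow hε hG, ← diagPow_add hε₀]
    congr 1; funext i; fin_cases i <;> simp <;> linarith
  · rw [SU3.coe_conj_of_coe_eq_BM hB hG, SU3.coe_inv, hG, star_diagPow hε]
    congr 1; funext i; fin_cases i <;> simp

theorem statement3 (m n : ℕ) (hm : 0 < m) (hn : 0 < n) (hnm : n ∣ m)
    (k l l' : ℤ)
    (hl : 1 + k + k ^ 2 = l * ((m / n : ℕ) : ℤ))
    (hl' : 1 + 2 * k = l' * ((m / n : ℕ) : ℤ))
    (E B F G : SU3)
    (hE : (E : Matrix (Fin 3) (Fin 3) ℂ) = EM)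
    (hB : (B : Matrix (Fin 3) (Fin 3) ℂ) = BM)
    (hF : (F : Matrix (Fin 3) (Fin 3) ℂ) = FM m k)
    (hG : (G : Matrix (Fin 3) (Fin 3) ℂ) = GM m (m / n)) :
    E * F * E⁻¹ = F ^ k * G ^ l ∧
    E * G * E⁻¹ = F ^ (-((m / n : ℕ) : ℤ)) * G ^ (-(k + 1)) ∧
    B * F * B⁻¹ = F * G ^ l' ∧
    B * G * B⁻¹ = G⁻¹ :=
  statement3_general m n k l l' hl hl' E B F G hE hB hF hG

end
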